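/- The Alexandroff extension 2^{ℕ}_f ∪ {ℕ} of the space of nonempty finite subsets of ℕ with the upper semifinite topology is homeomorphic to the inverse limit of the inverse sequence of finite spaces {2^{{1,...,n}}, p_{n,n+1}}, where p_{n,n+1}(C) = C if n+1 ∉ C and p_{n,n+1}(C) = {1,...,n} if n+1 ∈ C. -/

import Mathlib

open Set Topology TopologicalSpace

/-- The set of nonempty subsets of `X`: the hyperspace of the discrete space on `X`. -/
def NESet (X : Type*) := {C : Set X // C.Nonempty}

/-- The upper semifinite topology on the hyperspace of the discrete space `X`,
generated by the sets `B(U) = {C | C ⊆ U}` for `U ⊆ X`. -/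
instance NESet.topologicalSpace (X : Type*) : TopologicalSpace (NESet X) :=
  TopologicalSpace.generateFrom {S | ∃ U : Set X, S = {C : NESet X | C.1 ⊆ U}}

/-- The set of nonempty finite subsets of `X`. -/
def NEFin (X : Type*) := {C : Set X // C.Nonempty ∧ C.Finite}

/-- Inclusion of the nonempty finite subsets into the nonempty subsets. -/
noncomputable def NEFin.incl {X : Type*} (C : NEFin X) : NESet X := ⟨C.1, C.2.1⟩

/-- The subspace topology on the nonempty finite subsets, induced by the
upper semifinite topology. -/
noncomputable instance NEFin.topologicalSpace (X : Type*) : TopologicalSpace (NEFin X) :=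
  TopologicalSpace.induced NEFin.incl inferInstance

/-- The finite space of nonempty subsets of `{0, 1, ..., n}` with the upper semifinite
topology. -/
def Fn (n : ℕ) := {C : Set ℕ // C.Nonempty ∧ C ⊆ Set.Iic n}

instance Fn.topologicalSpace (n : ℕ) : TopologicalSpace (Fn n) :=
  TopologicalSpace.generateFrom {S | ∃ U : Set ℕ, S = {C : Fn n | C.1 ⊆ U}}

/-- The bonding map: `p(C) = C` if `n+1 ∉ C` and `p(C) = {0, ..., n}` if `n+1 ∈ C`. -/
noncomputable def pmap (n : ℕ) : Fn (n + 1) → Fn n := fun C =>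
  letI := Classical.propDecidable ((n + 1) ∈ C.1)
  if h : (n + 1) ∈ C.1 then ⟨Set.Iic n, ⟨0, Nat.zero_le n⟩, subset_rfl⟩
  else ⟨C.1, C.2.1, fun x hx =>
    Nat.lt_succ_iff.mp (lt_of_le_of_ne (C.2.2 hx) (fun he => h (by subst he; exact hx)))⟩

/-- The inverse limit of the inverse sequence `{2^{0..n}, p}`. -/
def InvLim := {c : (n : ℕ) → Fn n // ∀ n : ℕ, pmap n (c (n + 1)) = c n}

instance : TopologicalSpace InvLim :=
  TopologicalSpace.induced (fun c : InvLim => c.1) inferInstance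

/-!
The bonding maps are the truncations `truncAt C n`, equal to `C` if `C ⊆ [0, n]` and to `[0, n]`
otherwise, and these compose: `truncAt (truncAt C m) n = truncAt C n` for `n ≤ m`. So a set `C`
gives the thread `n ↦ truncAt C n`, and conversely a thread `c` is the thread of its limit set
`⋂ n, (c n ∪ (n, ∞))`: either every `c n` is `[0, n]` and the limit set is `ℕ`, or the thread is
eventually constant and the limit set is that finite value. Both maps pull basic open sets
`{C | C ⊆ U}` back to open sets, because `truncAt C n ⊆ U` iff `C ⊆ U ∩ [0, n]` or `[0, n] ⊆ U`.
-/

open Classical in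
noncomputable def truncAt (C : Set ℕ) (n : ℕ) : Set ℕ := if C ⊆ Iic n then C else Iic n

lemma truncAt_of_subset {C : Set ℕ} {n : ℕ} (h : C ⊆ Iic n) : truncAt C n = C := by
  rw [truncAt, if_pos h]

lemma truncAt_of_not_subset {C : Set ℕ} {n : ℕ} (h : ¬ C ⊆ Iic n) : truncAt C n = Iic n := by
  rw [truncAt, if_neg h]

lemma truncAt_subset_Iic (C : Set ℕ) (n : ℕ) : truncAt C n ⊆ Iic n := by
  by_cases h : C ⊆ Iic n
  · rwa [truncAt_of_subset h]
  · rw [truncAt_of_not_subset h]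

lemma truncAt_nonempty {C : Set ℕ} (hC : C.Nonempty) (n : ℕ) : (truncAt C n).Nonempty := by
  by_cases h : C ⊆ Iic n
  · rwa [truncAt_of_subset h]
  · rw [truncAt_of_not_subset h]
    exact nonempty_Iic

lemma truncAt_univ (n : ℕ) : truncAt univ n = Iic n :=
  truncAt_of_not_subset fun h => (h (mem_univ (n + 1))).not_gt (Nat.lt_succ_self n)

lemma truncAt_truncAt (C : Set ℕ) {n m : ℕ} (hnm : n ≤ m) :
    truncAt (truncAt C m) n = truncAt C n := by
  by_cases hm : C ⊆ Iic m
  · rw [truncAt_of_subset hm]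
  · have hn : ¬ C ⊆ Iic n := fun h => hm (h.trans (Iic_subset_Iic.mpr hnm))
    rw [truncAt_of_not_subset hm, truncAt_of_not_subset hn]
    rcases hnm.eq_or_lt with rfl | hlt
    · exact truncAt_of_subset subset_rfl
    · exact truncAt_of_not_subset fun h => (h (mem_Iic.mpr le_rfl)).not_gt hlt

lemma truncAt_subset_iff {C U : Set ℕ} {n : ℕ} :
    truncAt C n ⊆ U ↔ C ⊆ U ∩ Iic n ∨ Iic n ⊆ U := by
  by_cases h : C ⊆ Iic n
  · rw [truncAt_of_subset h, subset_inter_iff]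
    exact ⟨fun hU => Or.inl ⟨hU, h⟩, fun hU => hU.elim And.left h.trans⟩
  · rw [truncAt_of_not_subset h, subset_inter_iff]
    exact ⟨Or.inr, fun hU => hU.resolve_left fun hC => h hC.2⟩

lemma subset_truncAt_union_Ioi (C : Set ℕ) (n : ℕ) : C ⊆ truncAt C n ∪ Ioi n := by
  by_cases h : C ⊆ Iic n
  · rw [truncAt_of_subset h]
    exact subset_union_left
  · rw [truncAt_of_not_subset h, Iic_union_Ioi]
    exact subset_univ C

lemma iInter_truncAt_union_Ioi {C : Set ℕ} (hC : C.Finite ∨ C = univ) :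
    ⋂ n, (truncAt C n ∪ Ioi n) = C := by
  rcases hC with hfin | rfl
  · obtain ⟨N, hN⟩ := hfin.bddAbove
    refine (subset_iInter (subset_truncAt_union_Ioi C)).antisymm' fun k hk => ?_
    have hsub : C ⊆ Iic (max k N) := fun x hx => mem_Iic.mpr ((hN hx).trans (le_max_right k N))
    have hk' := mem_iInter.mp hk (max k N)
    rw [truncAt_of_subset hsub] at hk'
    exact hk'.resolve_right (not_lt.mpr (le_max_left k N))
  · simp only [truncAt_univ, Iic_union_Ioi, iInter_const]

lemma subset_iff_exists_truncAt_subset {L U : Set ℕ} (hL : L.Finite ∨ L = univ) {j : ℕ}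
    (hj : j ∉ U) : L ⊆ U ↔ ∃ n, j ≤ n ∧ truncAt L n ⊆ U := by
  constructor
  · intro hLU
    have hfin : L.Finite := hL.resolve_right fun h => hj (hLU (h ▸ mem_univ j))
    obtain ⟨N, hN⟩ := hfin.bddAbove
    have hsub : L ⊆ Iic (max j N) := fun x hx => mem_Iic.mpr ((hN hx).trans (le_max_right j N))
    exact ⟨max j N, le_max_left j N, (truncAt_of_subset hsub).symm ▸ hLU⟩
  · rintro ⟨n, hjn, hn⟩
    exact ((truncAt_subset_iff.mp hn).resolve_right fun h => hj (h (mem_Iic.mpr hjn))).trans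
      inter_subset_left

lemma pmap_val (n : ℕ) (D : Fn (n + 1)) : (pmap n D).1 = truncAt D.1 n := by
  have hD : D.1 ⊆ Iic n ↔ n + 1 ∉ D.1 :=
    ⟨fun h hn => (h hn).not_gt (Nat.lt_succ_self n), fun h x hx =>
      Nat.lt_add_one_iff.mp ((D.2.2 hx).lt_of_ne fun he => h (he ▸ hx))⟩
  by_cases h : n + 1 ∈ D.1
  · simp [pmap, h, truncAt_of_not_subset (hD.not_left.mpr h)]
  · simp [pmap, h, truncAt_of_subset (hD.mpr h)]

lemma Fn.isOpen_setOf_subset (n : ℕ) (U : Set ℕ) : IsOpen {C : Fn n | C.1 ⊆ U} :=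
  GenerateOpen.basic _ ⟨U, rfl⟩

lemma NESet.isOpen_setOf_subset {X : Type*} (U : Set X) : IsOpen {C : NESet X | C.1 ⊆ U} :=
  GenerateOpen.basic _ ⟨U, rfl⟩

namespace InvLim

lemma val_eq_truncAt (c : InvLim) {n m : ℕ} (hnm : n ≤ m) :
    (c.1 n).1 = truncAt (c.1 m).1 n := by
  induction m, hnm using Nat.le_induction with
  | base => exact (truncAt_of_subset (c.1 n).2.2).symm
  | succ m hnm ih => rw [ih, ← c.2 m, pmap_val, truncAt_truncAt _ hnm]

lemma val_eq_of_ne_Iic (c : InvLim) {m k : ℕ} (hm : (c.1 m).1 ≠ Iic m) (hmk : m ≤ k) :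
    (c.1 k).1 = (c.1 m).1 := by
  rw [val_eq_truncAt c hmk] at hm ⊢
  by_cases h : (c.1 k).1 ⊆ Iic m
  · rw [truncAt_of_subset h]
  · exact absurd (truncAt_of_not_subset h) hm

def limSet (c : InvLim) : Set ℕ := ⋂ n, ((c.1 n).1 ∪ Ioi n)

lemma limSet_eq_of_ne_Iic (c : InvLim) {m : ℕ} (hm : (c.1 m).1 ≠ Iic m) :
    limSet c = (c.1 m).1 := by
  refine subset_antisymm (fun k hk => ?_) (subset_iInter fun n => ?_)
  · have hk' := mem_iInter.mp hk (max k m)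
    rw [val_eq_of_ne_Iic c hm (le_max_right k m)] at hk'
    exact hk'.resolve_right (not_lt.mpr (le_max_left k m))
  · rcases le_total m n with hmn | hnm
    · rw [val_eq_of_ne_Iic c hm hmn]
      exact subset_union_left
    · rw [val_eq_truncAt c hnm]
      exact subset_truncAt_union_Ioi _ n

lemma limSet_eq_univ (c : InvLim) (h : ∀ m, (c.1 m).1 = Iic m) : limSet c = univ := by
  simp only [limSet, h, Iic_union_Ioi, iInter_const]

lemma val_eq_truncAt_limSet (c : InvLim) (n : ℕ) : (c.1 n).1 = truncAt (limSet c) n := by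
  by_cases h : ∀ m, (c.1 m).1 = Iic m
  · rw [limSet_eq_univ c h, truncAt_univ, h n]
  · push Not at h
    obtain ⟨m, hm⟩ := h
    rw [val_eq_truncAt c (le_max_right m n), limSet_eq_of_ne_Iic c hm,
      val_eq_of_ne_Iic c hm (le_max_left m n)]

lemma limSet_nonempty (c : InvLim) : (limSet c).Nonempty := by
  by_contra h
  have h0 := val_eq_truncAt_limSet c 0
  rw [not_nonempty_iff_eq_empty.mp h, truncAt_of_subset (empty_subset _)] at h0
  exact (c.1 0).2.1.ne_empty h0

lemma limSet_finite_or_eq_univ (c : InvLim) : (limSet c).Finite ∨ limSet c = univ := by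
  by_cases h : ∀ m, (c.1 m).1 = Iic m
  · exact Or.inr (limSet_eq_univ c h)
  · push Not at h
    obtain ⟨m, hm⟩ := h
    rw [limSet_eq_of_ne_Iic c hm]
    exact Or.inl ((finite_Iic m).subset (c.1 m).2.2)

noncomputable def ofSet (C : Set ℕ) (hC : C.Nonempty) : InvLim :=
  ⟨fun n => (⟨truncAt C n, truncAt_nonempty hC n, truncAt_subset_Iic C n⟩ : Fn n),
    fun n => Subtype.ext ((pmap_val n _).trans (truncAt_truncAt C n.le_succ))⟩

lemma limSet_ofSet {C : Set ℕ} (hC : C.Nonempty) (hCf : C.Finite ∨ C = univ) :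
    limSet (ofSet C hC) = C :=
  iInter_truncAt_union_Ioi hCf

lemma ofSet_limSet (c : InvLim) : ofSet (limSet c) (limSet_nonempty c) = c :=
  Subtype.ext <| funext fun n => Subtype.ext (val_eq_truncAt_limSet c n).symm

lemma continuous_ofSet : Continuous fun C : NESet ℕ => ofSet C.1 C.2 := by
  refine continuous_induced_rng.2 (continuous_pi fun n => continuous_generateFrom_iff.2 ?_)
  rintro _ ⟨U, rfl⟩
  convert (NESet.isOpen_setOf_subset (U ∩ Iic n)).union (isOpen_const (p := Iic n ⊆ U)) using 1
  exact ext fun C => truncAt_subset_iff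

lemma continuous_val_apply (n : ℕ) : Continuous fun c : InvLim => c.1 n :=
  (continuous_apply n).comp continuous_induced_dom

lemma continuous_limSet :
    Continuous (Y := NESet ℕ) fun c : InvLim => ⟨limSet c, limSet_nonempty c⟩ := by
  refine continuous_generateFrom_iff.2 ?_
  rintro _ ⟨U, rfl⟩
  by_cases hU : ∃ j, j ∉ U
  · obtain ⟨j, hj⟩ := hU
    convert isOpen_biUnion fun n (_ : n ∈ Ici j) =>
      (Fn.isOpen_setOf_subset n U).preimage (continuous_val_apply n) using 1
    ext c
    simp only [mem_preimage, mem_ofPred_eq, mem_iUnion, mem_Ici, exists_prop,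
      val_eq_truncAt_limSet c]
    exact subset_iff_exists_truncAt_subset (limSet_finite_or_eq_univ c) hj
  · push Not at hU
    convert isOpen_univ
    exact eq_univ_of_forall fun c k _ => hU k

end InvLim

/-- The Alexandroff extension `2^ℕ_f ∪ {ℕ}` of the space of nonempty finite subsets of `ℕ`
with the upper semifinite topology (a subspace of `2^ℕ_u`) is homeomorphic to the inverse
limit of the inverse sequence of finite spaces `{2^{0..n}, p}`. -/
theorem stmt16 :
    Nonempty (({C : NESet ℕ // C.1.Finite ∨ C.1 = Set.univ}) ≃ₜ InvLim) :=
  ⟨{ toFun := fun C => InvLim.ofSet C.1.1 C.1.2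
     invFun := fun c =>
       ⟨⟨InvLim.limSet c, InvLim.limSet_nonempty c⟩, InvLim.limSet_finite_or_eq_univ c⟩
     left_inv := fun C => Subtype.ext (Subtype.ext (InvLim.limSet_ofSet C.1.2 C.2))
     right_inv := InvLim.ofSet_limSet
     continuous_toFun := InvLim.continuous_ofSet.comp continuous_subtype_val
     continuous_invFun := InvLim.continuous_limSet.subtype_mk _ }⟩
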